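/- arXiv:2511.21493 — 4 statements merged into one kernel-verified Lean document; each statement's English description precedes it below -/
import Mathlib

section
/- Deformed-weight parametric Fourier identity (Example of the generalized Fourier identity with edge weights in d = 4-2ε): Let ε ∈ ℝ with ε < 1 and let A, B > 0 be real. Then both integrands below are Lebesgue integrable on (0,∞)² and ∫₀^∞ ∫₀^∞ α₂^{-ε} / ((α₁+α₂+1)·(α₂ + A·α₁ + B·α₁α₂)^{1-ε}) dα₁ dα₂ = ∫₀^∞ ∫₀^∞ α₁^{-ε} / ((α₁+α₂+1)^{1-ε}·(α₂ + A·α₁ + B·α₁α₂)) dα₁ dα₂. -/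
/-!
The Cremona substitution `(α₁, α₂) ↦ (1 / (B α₁), A / (B α₂))` is an involution of the open
quadrant with Jacobian `A / (B² α₁² α₂²)`. It exchanges the two Symanzik-type polynomials
`α₁ + α₂ + 1` and `α₂ + A α₁ + B α₁ α₂` up to monomial factors, and these factors combine with
the Jacobian to turn the position-space integrand into the momentum-space one. Integrability of
the momentum-space integrand comes from bounding both polynomials below by weighted
arithmetic–geometric means, which dominates the integrand by a product of one-variable functions
`t ^ (-p) * (1 + t) ^ (-l)` with `p < 1 < p + l`.
-/

open MeasureTheory Set Real

noncomputable def momentumIntegrand (ε A B : ℝ) (α : ℝ × ℝ) : ℝ :=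
  α.2 ^ (-ε) / ((α.1 + α.2 + 1) * (α.2 + A * α.1 + B * α.1 * α.2) ^ (1 - ε))

noncomputable def positionIntegrand (ε A B : ℝ) (α : ℝ × ℝ) : ℝ :=
  α.1 ^ (-ε) / ((α.1 + α.2 + 1) ^ (1 - ε) * (α.2 + A * α.1 + B * α.1 * α.2))

theorem integrableOn_Ioi_rpow_neg_mul_one_add_rpow_neg {p l : ℝ} (hp : p < 1) (hpl : 1 < p + l) :
    IntegrableOn (fun x : ℝ => x ^ (-p) * (1 + x) ^ (-l)) (Ioi 0) := by
  have hmeas : AEStronglyMeasurable (fun x : ℝ => x ^ (-p) * (1 + x) ^ (-l)) :=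
    (by fun_prop : Measurable fun x : ℝ => x ^ (-p) * (1 + x) ^ (-l)).aestronglyMeasurable
  rw [← Ioc_union_Ioi_eq_Ioi zero_le_one]
  refine IntegrableOn.union ?_ ?_
  · have hint : IntegrableOn (fun x : ℝ => x ^ (-p)) (Ioc 0 1) := by
      rw [← intervalIntegrable_iff_integrableOn_Ioc_of_le zero_le_one]
      exact intervalIntegral.intervalIntegrable_rpow' (by linarith)
    refine hint.mono' hmeas.restrict ?_
    filter_upwards [ae_restrict_mem measurableSet_Ioc] with x hx
    have hx0 : 0 < x := hx.1
    rw [norm_of_nonneg (by positivity)]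
    exact mul_le_of_le_one_right (by positivity)
      (rpow_le_one_of_one_le_of_nonpos (by linarith) (by linarith))
  · have hint : IntegrableOn (fun x : ℝ => x ^ (-(p + l))) (Ioi 1) :=
      integrableOn_Ioi_rpow_of_lt (by linarith) one_pos
    refine hint.mono' hmeas.restrict ?_
    filter_upwards [ae_restrict_mem measurableSet_Ioi] with x (hx : 1 < x)
    have hx0 : 0 < x := one_pos.trans hx
    rw [norm_of_nonneg (by positivity), neg_add, rpow_add hx0]
    exact mul_le_mul_of_nonneg_left (rpow_le_rpow_of_nonpos hx0 (by linarith) (by linarith))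
      (by positivity)

theorem MeasureTheory.IntegrableOn.mul_prod {α β L : Type*} [MeasurableSpace α]
    [MeasurableSpace β] [NormedRing L] {μ : Measure α} {ν : Measure β} [SFinite μ] [SFinite ν]
    {f : α → L} {g : β → L} {s : Set α} {t : Set β}
    (hf : IntegrableOn f s μ) (hg : IntegrableOn g t ν) :
    IntegrableOn (fun z : α × β => f z.1 * g z.2) (s ×ˢ t) (μ.prod ν) := by
  rw [IntegrableOn, ← Measure.prod_restrict]
  exact Integrable.mul_prod hf hg

theorem momentumIntegrand_le {ε A B a b c l x y : ℝ} (hε : ε ≤ 1) (hA : 0 < A) (hB : 0 < B)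
    (ha : 0 ≤ a) (hb : 0 ≤ b) (hc : 0 ≤ c) (habc : a + b + c = 1) (hl₀ : 0 ≤ l) (hl₁ : l ≤ 1)
    (hx : 0 < x) (hy : 0 < y) :
    momentumIntegrand ε A B (x, y) ≤
      (A ^ b * B ^ c) ^ (ε - 1) * ((x ^ (-((b + c) * (1 - ε))) * (1 + x) ^ (-l)) *
        (y ^ (-(ε + (a + c) * (1 - ε))) * (1 + y) ^ (-(1 - l)))) := by
  have hG : y ^ a * (A * x) ^ b * (B * x * y) ^ c ≤ y + A * x + B * x * y := by
    refine (geom_mean_le_arith_mean3_weighted ha hb hc hy.le (by positivity) (by positivity)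
      habc).trans ?_
    nlinarith [mul_pos hA hx, mul_pos (mul_pos hB hx) hy]
  have hH : (1 + x) ^ l * (1 + y) ^ (1 - l) ≤ x + y + 1 := by
    refine (geom_mean_le_arith_mean2_weighted hl₀ (sub_nonneg.2 hl₁) (by positivity)
      (by positivity) (add_sub_cancel l 1)).trans ?_
    nlinarith
  calc momentumIntegrand ε A B (x, y)
      ≤ y ^ (-ε) / ((1 + x) ^ l * (1 + y) ^ (1 - l) *
          (y ^ a * (A * x) ^ b * (B * x * y) ^ c) ^ (1 - ε)) := by
        unfold momentumIntegrand
        gcongr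
    _ = _ := by
        refine log_injOn_pos (mem_Ioi.2 (by positivity)) (mem_Ioi.2 (by positivity)) ?_
        simp (disch := positivity) only [log_div, log_mul, log_rpow]
        ring

theorem integrableOn_momentumIntegrand {ε A B : ℝ} (hε : ε < 1) (hA : 0 < A) (hB : 0 < B) :
    IntegrableOn (momentumIntegrand ε A B) (Ioi 0 ×ˢ Ioi 0) := by
  -- AM-GM weights `a = 1 - s`, `b = c = s / 2`, `l = (1 + 3 s) / 4`: the resulting exponent
  -- pairs `(1 - s, l)` and `((1 + s) / 2, 1 - l)` both satisfy `p < 1 < p + l`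
  set s := (2 - ε)⁻¹
  have hs₀ : 0 < s := inv_pos.2 (by linarith)
  have hs₁ : s < 1 := inv_lt_one_of_one_lt₀ (by linarith)
  have hsε : s * (1 - ε) = 1 - s := by
    have : s * (2 - ε) = 1 := inv_mul_cancel₀ (by linarith)
    linarith
  have hdom : IntegrableOn (fun z : ℝ × ℝ => (A ^ (s / 2) * B ^ (s / 2)) ^ (ε - 1) *
      ((z.1 ^ (-(1 - s)) * (1 + z.1) ^ (-((1 + 3 * s) / 4))) *
        (z.2 ^ (-((1 + s) / 2)) * (1 + z.2) ^ (-(1 - (1 + 3 * s) / 4))))) (Ioi 0 ×ˢ Ioi 0) :=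
    ((integrableOn_Ioi_rpow_neg_mul_one_add_rpow_neg (by linarith) (by linarith)).mul_prod
      (integrableOn_Ioi_rpow_neg_mul_one_add_rpow_neg (by linarith) (by linarith))).const_mul _
  have hmeas : Measurable (momentumIntegrand ε A B) := by
    unfold momentumIntegrand
    fun_prop
  refine hdom.mono' hmeas.aestronglyMeasurable.restrict ?_
  filter_upwards [ae_restrict_mem (measurableSet_Ioi.prod measurableSet_Ioi)] with z hz
  have hz₁ : 0 < z.1 := hz.1
  have hz₂ : 0 < z.2 := hz.2
  rw [norm_of_nonneg (by unfold momentumIntegrand; positivity)]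
  calc momentumIntegrand ε A B z
      ≤ (A ^ (s / 2) * B ^ (s / 2)) ^ (ε - 1) *
          ((z.1 ^ (-((s / 2 + s / 2) * (1 - ε))) * (1 + z.1) ^ (-((1 + 3 * s) / 4))) *
            (z.2 ^ (-(ε + (1 - s + s / 2) * (1 - ε))) *
              (1 + z.2) ^ (-(1 - (1 + 3 * s) / 4)))) :=
        momentumIntegrand_le hε.le hA hB (by linarith) (by positivity) (by positivity)
          (by ring) (by positivity) (by linarith) hz₁ hz₂
    _ = _ := by
        rw [add_halves, hsε, show ε + (1 - s + s / 2) * (1 - ε) = (1 + s) / 2 by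
          linear_combination (-1 / 2 : ℝ) * hsε]

section CremonaInversion

variable {c₁ c₂ : ℝ}

theorem div_prod_div_involutive (h₁ : c₁ ≠ 0) (h₂ : c₂ ≠ 0) :
    Function.Involutive (fun z : ℝ × ℝ => (c₁ / z.1, c₂ / z.2)) := fun _ =>
  Prod.ext (div_div_cancel₀ h₁) (div_div_cancel₀ h₂)

theorem image_div_prod_div_Ioi_prod_Ioi (h₁ : 0 < c₁) (h₂ : 0 < c₂) :
    (fun z : ℝ × ℝ => (c₁ / z.1, c₂ / z.2)) '' (Ioi 0 ×ˢ Ioi 0) = Ioi 0 ×ˢ Ioi 0 := by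
  have hmaps : MapsTo (fun z : ℝ × ℝ => (c₁ / z.1, c₂ / z.2)) (Ioi 0 ×ˢ Ioi 0) (Ioi 0 ×ˢ Ioi 0) :=
    fun z hz => ⟨div_pos h₁ hz.1, div_pos h₂ hz.2⟩
  refine hmaps.image_subset.antisymm fun z hz => ⟨_, hmaps hz, ?_⟩
  exact div_prod_div_involutive h₁.ne' h₂.ne' z

theorem hasFDerivAt_div_prod_div {z : ℝ × ℝ} (hz₁ : z.1 ≠ 0) (hz₂ : z.2 ≠ 0) :
    HasFDerivAt (fun z : ℝ × ℝ => (c₁ / z.1, c₂ / z.2))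
      (((1 : ℝ →L[ℝ] ℝ).smulRight (-c₁ / z.1 ^ 2)).prodMap
        ((1 : ℝ →L[ℝ] ℝ).smulRight (-c₂ / z.2 ^ 2))) z := by
  have hdiv : ∀ {c x : ℝ}, x ≠ 0 → HasDerivAt (fun x => c / x) (-c / x ^ 2) x := fun hx => by
    simpa [div_eq_mul_inv, neg_div] using (hasDerivAt_inv hx).const_mul _
  exact (hdiv hz₁).hasFDerivAt.prodMap z (hdiv hz₂).hasFDerivAt

theorem abs_det_fderiv_div_prod_div (h₁ : 0 < c₁) (h₂ : 0 < c₂) (z : ℝ × ℝ) :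
    |(((1 : ℝ →L[ℝ] ℝ).smulRight (-c₁ / z.1 ^ 2)).prodMap
        ((1 : ℝ →L[ℝ] ℝ).smulRight (-c₂ / z.2 ^ 2))).det| = c₁ * c₂ / (z.1 ^ 2 * z.2 ^ 2) := by
  simp [ContinuousLinearMap.det, LinearMap.det_prodMap, abs_div, abs_of_pos h₁, abs_of_pos h₂,
    div_mul_div_comm]

variable {E : Type*} [NormedAddCommGroup E] [NormedSpace ℝ E]

theorem integrableOn_Ioi_prod_Ioi_comp_div_iff (h₁ : 0 < c₁) (h₂ : 0 < c₂) (f : ℝ × ℝ → E) :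
    IntegrableOn (fun z : ℝ × ℝ => (c₁ * c₂ / (z.1 ^ 2 * z.2 ^ 2)) • f (c₁ / z.1, c₂ / z.2))
      (Ioi 0 ×ˢ Ioi 0) ↔ IntegrableOn f (Ioi 0 ×ˢ Ioi 0) := by
  have := integrableOn_image_iff_integrableOn_abs_det_fderiv_smul volume
    (measurableSet_Ioi.prod measurableSet_Ioi)
    (fun z hz => (hasFDerivAt_div_prod_div hz.1.ne' hz.2.ne').hasFDerivWithinAt)
    (div_prod_div_involutive h₁.ne' h₂.ne').injective.injOn f
  simpa only [image_div_prod_div_Ioi_prod_Ioi h₁ h₂, abs_det_fderiv_div_prod_div h₁ h₂]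
    using this.symm

theorem integral_Ioi_prod_Ioi_comp_div (h₁ : 0 < c₁) (h₂ : 0 < c₂) (f : ℝ × ℝ → E) :
    ∫ z in Ioi 0 ×ˢ Ioi 0, (c₁ * c₂ / (z.1 ^ 2 * z.2 ^ 2)) • f (c₁ / z.1, c₂ / z.2) =
      ∫ z in Ioi 0 ×ˢ Ioi 0, f z := by
  have := integral_image_eq_integral_abs_det_fderiv_smul volume
    (measurableSet_Ioi.prod measurableSet_Ioi)
    (fun z hz => (hasFDerivAt_div_prod_div hz.1.ne' hz.2.ne').hasFDerivWithinAt)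
    (div_prod_div_involutive h₁.ne' h₂.ne').injective.injOn f
  simpa only [image_div_prod_div_Ioi_prod_Ioi h₁ h₂, abs_det_fderiv_div_prod_div h₁ h₂]
    using this.symm

end CremonaInversion

theorem momentumIntegrand_eq_smul_positionIntegrand_div_prod_div {ε A B x y : ℝ} (hA : 0 < A)
    (hB : 0 < B) (hx : 0 < x) (hy : 0 < y) :
    momentumIntegrand ε A B (x, y) =
      (B⁻¹ * (A / B) / (x ^ 2 * y ^ 2)) • positionIntegrand ε A B (B⁻¹ / x, A / B / y) := by
  have hsum : B⁻¹ / x + A / B / y + 1 = (y + A * x + B * x * y) / (B * x * y) := by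
    field_simp
  have hquad : A / B / y + A * (B⁻¹ / x) + B * (B⁻¹ / x) * (A / B / y) =
      A * (x + y + 1) / (B * x * y) := by
    field_simp
  unfold momentumIntegrand positionIntegrand
  rw [smul_eq_mul, hsum, hquad]
  refine log_injOn_pos (mem_Ioi.2 (by positivity)) (mem_Ioi.2 (by positivity)) ?_
  simp (disch := positivity) only [log_div, log_mul, log_rpow, log_inv, log_pow]
  ring

/-- Deformed-weight parametric Fourier identity: the Feynman-parametric representation of
the momentum-space one-loop triangle with deformed weights equals that of its
position-space counterpart. -/
theorem deformed_weight_parametric_fourier_identity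
    (ε : ℝ) (hε : ε < 1) (A B : ℝ) (hA : 0 < A) (hB : 0 < B) :
    IntegrableOn (fun α : ℝ × ℝ =>
        α.2 ^ (-ε) / ((α.1 + α.2 + 1) * (α.2 + A * α.1 + B * α.1 * α.2) ^ (1 - ε)))
      (Set.Ioi 0 ×ˢ Set.Ioi 0) ∧
    IntegrableOn (fun α : ℝ × ℝ =>
        α.1 ^ (-ε) / ((α.1 + α.2 + 1) ^ (1 - ε) * (α.2 + A * α.1 + B * α.1 * α.2)))
      (Set.Ioi 0 ×ˢ Set.Ioi 0) ∧
    (∫ α in (Set.Ioi (0:ℝ)) ×ˢ (Set.Ioi (0:ℝ)),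
        α.2 ^ (-ε) / ((α.1 + α.2 + 1) * (α.2 + A * α.1 + B * α.1 * α.2) ^ (1 - ε))) =
      ∫ α in (Set.Ioi (0:ℝ)) ×ˢ (Set.Ioi (0:ℝ)),
        α.1 ^ (-ε) / ((α.1 + α.2 + 1) ^ (1 - ε) * (α.2 + A * α.1 + B * α.1 * α.2)) := by
  have hcremona : EqOn (momentumIntegrand ε A B)
      (fun z => (B⁻¹ * (A / B) / (z.1 ^ 2 * z.2 ^ 2)) •
        positionIntegrand ε A B (B⁻¹ / z.1, A / B / z.2)) (Ioi 0 ×ˢ Ioi 0) := fun z hz =>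
    momentumIntegrand_eq_smul_positionIntegrand_div_prod_div hA hB hz.1 hz.2
  have hmomentum := integrableOn_momentumIntegrand hε hA hB
  have hposition : IntegrableOn (positionIntegrand ε A B) (Ioi 0 ×ˢ Ioi 0) :=
    (integrableOn_Ioi_prod_Ioi_comp_div_iff (inv_pos.2 hB) (div_pos hA hB) _).1
      (hmomentum.congr_fun hcremona (measurableSet_Ioi.prod measurableSet_Ioi))
  refine ⟨hmomentum, hposition, ?_⟩
  calc ∫ z in Ioi 0 ×ˢ Ioi 0, momentumIntegrand ε A B z
      = ∫ z in Ioi 0 ×ˢ Ioi 0, (B⁻¹ * (A / B) / (z.1 ^ 2 * z.2 ^ 2)) •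
          positionIntegrand ε A B (B⁻¹ / z.1, A / B / z.2) :=
        setIntegral_congr_fun (measurableSet_Ioi.prod measurableSet_Ioi) hcremona
    _ = ∫ z in Ioi 0 ×ˢ Ioi 0, positionIntegrand ε A B z :=
        integral_Ioi_prod_Ioi_comp_div (inv_pos.2 hB) (div_pos hA hB) _
end

section
/- Cremona transformation maps the Symanzik polynomial of the two-loop non-planar three-point graph to that of its planar dual: for all real P₁, P₂, S and all nonzero real α₁,…,α₆, one has (α₁α₂α₃α₄α₅α₆) · Q(1/α₁,…,1/α₆) = Q̃(α₁,…,α₆), where Q(α) = P₁·(α₅α₆(α₁+α₂+α₃+α₄) + α₁α₄α₆ + α₂α₃α₅) + P₂·(α₁α₂(α₃+α₄+α₅+α₆) + α₁α₃α₆ + α₂α₄α₅) + S·(α₃α₄(α₁+α₂+α₅+α₆) + α₂α₄α₆ + α₁α₃α₅) and Q̃(α) = P₁·(α₁α₄(α₂+α₃+α₆) + α₂α₃(α₁+α₄+α₅)) + P₂·(α₃α₆(α₁+α₄+α₅) + α₄α₅(α₂+α₃+α₆)) + S·(α₂α₆(α₁+α₄+α₅) + α₁α₅(α₂+α₃+α₆)).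 -/
/-- Second Symanzik polynomial of the two-loop non-planar three-point graph `N₁⁽²⁾`
(`α 0, …, α 5` are the Feynman parameters `α₁, …, α₆`). -/
def Qpoly (P₁ P₂ S : ℝ) (α : Fin 6 → ℝ) : ℝ :=
  P₁ * (α 4 * α 5 * (α 0 + α 1 + α 2 + α 3) + α 0 * α 3 * α 5 + α 1 * α 2 * α 4) +
  P₂ * (α 0 * α 1 * (α 2 + α 3 + α 4 + α 5) + α 0 * α 2 * α 5 + α 1 * α 3 * α 4) +
  S * (α 2 * α 3 * (α 0 + α 1 + α 4 + α 5) + α 1 * α 3 * α 5 + α 0 * α 2 * α 4)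

/-- Second Symanzik polynomial of the planar dual graph. -/
def Qdual (P₁ P₂ S : ℝ) (α : Fin 6 → ℝ) : ℝ :=
  P₁ * (α 0 * α 3 * (α 1 + α 2 + α 5) + α 1 * α 2 * (α 0 + α 3 + α 4)) +
  P₂ * (α 2 * α 5 * (α 0 + α 3 + α 4) + α 3 * α 4 * (α 1 + α 2 + α 5)) +
  S * (α 1 * α 5 * (α 0 + α 3 + α 4) + α 0 * α 4 * (α 1 + α 2 + α 5))

/-- The Cremona transformation `αᵢ → 1/αᵢ` maps the Symanzik polynomial of the two-loop
non-planar three-point graph to that of its planar dual. -/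
theorem cremona_maps_Q_to_dual (P₁ P₂ S : ℝ) (α : Fin 6 → ℝ) (hα : ∀ i, α i ≠ 0) :
    (α 0 * α 1 * α 2 * α 3 * α 4 * α 5) * Qpoly P₁ P₂ S (fun i => (α i)⁻¹) =
      Qdual P₁ P₂ S α := by
  have h0 := hα 0; have h1 := hα 1; have h2 := hα 2
  have h3 := hα 3; have h4 := hα 4; have h5 := hα 5
  simp only [Qpoly, Qdual]
  field_simp
  ring
end

section
/- Self-duality of the massless propagator in four dimensions under Fourier transform: for every Schwartz function φ : ℝ⁴ → ℂ, both integrands below are Lebesgue integrable and ∫_{ℝ⁴} ‖k‖^{-2} φ(k) dk = ∫_{ℝ⁴} ‖ξ‖^{-2} (𝓕φ)(ξ) dξ, where 𝓕φ(ξ) = ∫_{ℝ⁴} e^{-2πi⟨k,ξ⟩} φ(k) dk is the Fourier transform. -/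
/-!
Schwinger parametrisation: `(‖k‖²)⁻¹ = π ∫₀^∞ exp (-π t ‖k‖²) dt` for `k ≠ 0`. Pairing with `φ` and
swapping the integrals turns both sides into integrals over `t` of Gaussian pairings. The swap is
justified by `∫ exp (-π t ‖k‖²) ‖φ k‖ dk ≤ min (‖φ‖₁, ‖φ‖_∞ t^(-d/2))`, integrable on `(0, ∞)` as
soon as `d > 2`; the same Fubini argument yields integrability of `‖k‖⁻² φ`. Since `exp (-π t ‖·‖²)`
has Fourier transform `t^(-d/2) exp (-π ‖·‖² / t)`, self-adjointness of `𝓕` gives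
`∫ exp (-π t ‖ξ‖²) 𝓕φ ξ dξ = t^(-d/2) ∫ exp (-π ‖k‖² / t) φ k dk`, and for `d = 4` the substitution
`t ↦ 1/t`, which maps `t⁻² dt` to `dt`, matches the two Schwinger integrals.
-/

open MeasureTheory Real Set FourierTransform Module

theorem integral_Ioi_exp_neg_pi_mul_mul {x : ℝ} (hx : 0 < x) :
    ∫ t in Ioi (0 : ℝ), rexp (-(π * t) * x) = (π * x)⁻¹ := by
  have h : ∀ t : ℝ, -(π * t) * x = -(π * x) * t := fun t => by ring
  simp_rw [h]
  rw [integral_exp_mul_Ioi (by simp only [neg_lt_zero]; positivity), mul_zero, exp_zero,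
    neg_div_neg_eq, one_div]

theorem integrableOn_Ioi_of_le_const_of_le_rpow_neg {E : Type*} [NormedAddCommGroup E]
    {g : ℝ → E} {p C₁ C₂ : ℝ} (hp : 1 < p) (hg : AEStronglyMeasurable g (volume.restrict (Ioi 0)))
    (h₁ : ∀ t, 0 < t → ‖g t‖ ≤ C₁) (h₂ : ∀ t, 0 < t → ‖g t‖ ≤ C₂ * t ^ (-p)) :
    IntegrableOn g (Ioi 0) := by
  rw [← Ioc_union_Ioi_eq_Ioi zero_le_one]
  refine IntegrableOn.union ?_ ?_
  · refine Integrable.of_bound (hg.mono_measure (Measure.restrict_mono Ioc_subset_Ioi_self le_rfl))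
      C₁ ?_
    filter_upwards [ae_restrict_mem measurableSet_Ioc] with t ht using h₁ t ht.1
  · refine Integrable.mono' ((integrableOn_Ioi_rpow_of_lt (neg_lt_neg hp) one_pos).const_mul C₂)
      (hg.mono_measure (Measure.restrict_mono (Ioi_subset_Ioi zero_le_one) le_rfl)) ?_
    filter_upwards [ae_restrict_mem measurableSet_Ioi] with t ht using h₂ t (one_pos.trans ht)

theorem integral_Ioi_rpow_neg_two_smul_comp_inv {E : Type*} [NormedAddCommGroup E]
    [NormedSpace ℝ E] (g : ℝ → E) :
    ∫ t in Ioi (0 : ℝ), t ^ (-2 : ℝ) • g t⁻¹ = ∫ t in Ioi (0 : ℝ), g t := by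
  rw [← integral_comp_rpow_Ioi g (p := -1) (by norm_num)]
  refine setIntegral_congr_fun measurableSet_Ioi fun t _ => ?_
  norm_num [rpow_neg_one]

theorem exp_neg_pi_mul_mul_sq_le_one {t : ℝ} (ht : 0 ≤ t) (x : ℝ) :
    rexp (-(π * t) * x ^ 2) ≤ 1 := by
  rw [exp_le_one_iff, neg_mul]
  exact neg_nonpos.2 (by positivity)

variable {V : Type*} [NormedAddCommGroup V] [InnerProductSpace ℝ V] [FiniteDimensional ℝ V]
  [MeasurableSpace V] [BorelSpace V]

theorem integral_exp_neg_pi_mul_sq_norm {t : ℝ} (ht : 0 < t) :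
    ∫ k : V, rexp (-(π * t) * ‖k‖ ^ 2) = t ^ (-(finrank ℝ V / 2 : ℝ)) := by
  rw [GaussianFourier.integral_rexp_neg_mul_sq_norm (by positivity),
    div_mul_cancel_left₀ pi_ne_zero, inv_rpow ht.le, rpow_neg ht.le]

theorem integrable_exp_neg_pi_mul_sq_norm {t : ℝ} (ht : 0 < t) :
    Integrable fun k : V => rexp (-(π * t) * ‖k‖ ^ 2) :=
  Integrable.of_integral_ne_zero (by rw [integral_exp_neg_pi_mul_sq_norm ht]; positivity)

theorem fourier_exp_neg_pi_mul_sq_norm {t : ℝ} (ht : 0 < t) (ξ : V) :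
    𝓕 (fun k : V => (rexp (-(π * t) * ‖k‖ ^ 2) : ℂ)) ξ =
      ((t ^ (-(finrank ℝ V / 2 : ℝ)) * rexp (-(π * t⁻¹) * ‖ξ‖ ^ 2) : ℝ) : ℂ) := by
  have hb : 0 < ((π * t : ℝ) : ℂ).re := by simp only [Complex.ofReal_re]; positivity
  have h := fourier_gaussian_innerProductSpace hb ξ
  push_cast at h ⊢
  have hπ : (π : ℂ) ≠ 0 := Complex.ofReal_ne_zero.2 pi_ne_zero
  rw [h, div_mul_cancel_left₀ hπ, rpow_neg ht.le, ← inv_rpow ht.le,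
    Complex.ofReal_cpow (inv_nonneg.2 ht.le)]
  push_cast
  congr 2
  field_simp

section Schwinger

variable {E : Type*} [NormedAddCommGroup E] [NormedSpace ℝ E] {f : V → E} {M t : ℝ}

theorem integrable_exp_neg_pi_mul_sq_norm_smul (hf : Integrable f) (ht : 0 ≤ t) :
    Integrable fun k => rexp (-(π * t) * ‖k‖ ^ 2) • f k :=
  hf.bdd_smul 1 (by fun_prop) (.of_forall fun k => by
    rw [norm_of_nonneg (exp_pos _).le]; exact exp_neg_pi_mul_mul_sq_le_one ht ‖k‖)

theorem integral_norm_exp_neg_pi_mul_sq_norm_smul_le_integral_norm (hf : Integrable f)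
    (ht : 0 ≤ t) : ∫ k, ‖rexp (-(π * t) * ‖k‖ ^ 2) • f k‖ ≤ ∫ k, ‖f k‖ := by
  refine integral_mono_of_nonneg (.of_forall fun _ => norm_nonneg _) hf.norm
    (.of_forall fun k => ?_)
  simp only [norm_smul, norm_eq_abs, abs_exp]
  exact mul_le_of_le_one_left (norm_nonneg _) (exp_neg_pi_mul_mul_sq_le_one ht ‖k‖)

theorem integral_norm_exp_neg_pi_mul_sq_norm_smul_le_mul_rpow (hM : ∀ k, ‖f k‖ ≤ M) (ht : 0 < t) :
    ∫ k, ‖rexp (-(π * t) * ‖k‖ ^ 2) • f k‖ ≤ M * t ^ (-(finrank ℝ V / 2 : ℝ)) := by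
  rw [← integral_exp_neg_pi_mul_sq_norm ht, ← integral_const_mul]
  refine integral_mono_of_nonneg (.of_forall fun _ => norm_nonneg _)
    ((integrable_exp_neg_pi_mul_sq_norm ht).const_mul M) (.of_forall fun k => ?_)
  simp only [norm_smul, norm_eq_abs, abs_exp, mul_comm M]
  exact mul_le_mul_of_nonneg_left (hM k) (exp_pos _).le

theorem integrable_prod_exp_neg_pi_mul_sq_norm_smul (hf : Integrable f) (hM : ∀ k, ‖f k‖ ≤ M)
    (hV : 2 < finrank ℝ V) :
    Integrable (fun p : ℝ × V => rexp (-(π * p.1) * ‖p.2‖ ^ 2) • f p.2)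
      ((volume.restrict (Ioi 0)).prod volume) := by
  have hexp : Continuous fun p : ℝ × V => rexp (-(π * p.1) * ‖p.2‖ ^ 2) := by fun_prop
  have hmeas : AEStronglyMeasurable (fun p : ℝ × V => rexp (-(π * p.1) * ‖p.2‖ ^ 2) • f p.2)
      ((volume.restrict (Ioi 0)).prod volume) :=
    hexp.aestronglyMeasurable.smul hf.aestronglyMeasurable.comp_snd
  have hp : 1 < (finrank ℝ V / 2 : ℝ) := by
    have : (2 : ℝ) < finrank ℝ V := by exact_mod_cast hV
    linarith
  refine (integrable_prod_iff hmeas).2 ⟨?_, ?_⟩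
  · filter_upwards [ae_restrict_mem measurableSet_Ioi] with t ht
    exact integrable_exp_neg_pi_mul_sq_norm_smul hf (le_of_lt ht)
  · refine integrableOn_Ioi_of_le_const_of_le_rpow_neg (C₁ := ∫ k, ‖f k‖) (C₂ := M) hp
      hmeas.norm.integral_prod_right' (fun t ht => ?_) (fun t ht => ?_) <;>
    rw [norm_of_nonneg (integral_nonneg fun _ => norm_nonneg _)]
    · exact integral_norm_exp_neg_pi_mul_sq_norm_smul_le_integral_norm hf ht.le
    · exact integral_norm_exp_neg_pi_mul_sq_norm_smul_le_mul_rpow hM ht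

variable [CompleteSpace E]

theorem inv_sq_norm_smul_ae_eq_pi_smul_integral_Ioi [Nontrivial V] :
    ∀ᵐ k : V, (‖k‖ ^ 2)⁻¹ • f k = π • ∫ t in Ioi (0 : ℝ), rexp (-(π * t) * ‖k‖ ^ 2) • f k := by
  filter_upwards [(volume : Measure V).ae_ne 0] with k hk
  rw [integral_smul_const, integral_Ioi_exp_neg_pi_mul_mul (by positivity), smul_smul,
    mul_inv, mul_inv_cancel_left₀ pi_ne_zero]

theorem integrable_inv_sq_norm_smul (hf : Integrable f) (hM : ∀ k, ‖f k‖ ≤ M)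
    (hV : 2 < finrank ℝ V) : Integrable fun k => (‖k‖ ^ 2)⁻¹ • f k := by
  have : Nontrivial V := nontrivial_of_finrank_pos (R := ℝ) (by omega)
  have hprod := (integrable_prod_exp_neg_pi_mul_sq_norm_smul hf hM hV).swap
  exact (hprod.integral_prod_left.smul π).congr
    (inv_sq_norm_smul_ae_eq_pi_smul_integral_Ioi.mono fun _ h => h.symm)

theorem integral_inv_sq_norm_smul_eq_integral_Ioi (hf : Integrable f) (hM : ∀ k, ‖f k‖ ≤ M)
    (hV : 2 < finrank ℝ V) :
    ∫ k, (‖k‖ ^ 2)⁻¹ • f k = π • ∫ t in Ioi (0 : ℝ), ∫ k, rexp (-(π * t) * ‖k‖ ^ 2) • f k := by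
  have : Nontrivial V := nontrivial_of_finrank_pos (R := ℝ) (by omega)
  rw [integral_congr_ae inv_sq_norm_smul_ae_eq_pi_smul_integral_Ioi, integral_smul,
    integral_integral_swap (f := fun k (t : ℝ) => rexp (-(π * t) * ‖k‖ ^ 2) • f k)
      (integrable_prod_exp_neg_pi_mul_sq_norm_smul hf hM hV).swap]

end Schwinger

section Fourier

variable {E : Type*} [NormedAddCommGroup E] [NormedSpace ℂ E] [CompleteSpace E] {f : V → E}

theorem integral_exp_neg_pi_mul_sq_norm_smul_fourier (hf : Integrable f) {t : ℝ} (ht : 0 < t) :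
    ∫ ξ, rexp (-(π * t) * ‖ξ‖ ^ 2) • 𝓕 f ξ =
      t ^ (-(finrank ℝ V / 2 : ℝ)) • ∫ k, rexp (-(π * t⁻¹) * ‖k‖ ^ 2) • f k := by
  have hG : Integrable fun k : V => (rexp (-(π * t) * ‖k‖ ^ 2) : ℂ) :=
    (integrable_exp_neg_pi_mul_sq_norm ht).ofReal
  have hself_adjoint : ∫ ξ, 𝓕 (fun k : V => (rexp (-(π * t) * ‖k‖ ^ 2) : ℂ)) ξ • f ξ =
      ∫ x, (rexp (-(π * t) * ‖x‖ ^ 2) : ℂ) • 𝓕 f x := by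
    have h := VectorFourier.integral_fourierIntegral_smul_eq_flip (L := innerₗ V)
      continuous_fourierChar continuous_inner hG hf
    rwa [flip_innerₗ] at h
  calc ∫ ξ, rexp (-(π * t) * ‖ξ‖ ^ 2) • 𝓕 f ξ
      = ∫ ξ, 𝓕 (fun k : V => (rexp (-(π * t) * ‖k‖ ^ 2) : ℂ)) ξ • f ξ := by
        simp_rw [hself_adjoint, Complex.coe_smul]
    _ = ∫ ξ, t ^ (-(finrank ℝ V / 2 : ℝ)) • rexp (-(π * t⁻¹) * ‖ξ‖ ^ 2) • f ξ := by
        simp_rw [fourier_exp_neg_pi_mul_sq_norm ht, Complex.coe_smul, mul_smul]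
    _ = _ := integral_smul _ _

end Fourier

/-- Self-duality of the massless propagator in four dimensions under Fourier transform:
the tempered-distribution form of `1/k² = ∫ d⁴x/π² · e^{2ik·x}/x²`. -/
theorem massless_propagator_self_dual_4d
    (φ : SchwartzMap (EuclideanSpace ℝ (Fin 4)) ℂ) :
    Integrable (fun k : EuclideanSpace ℝ (Fin 4) => (((‖k‖ ^ 2)⁻¹ : ℝ) : ℂ) * φ k) ∧
    Integrable (fun ξ : EuclideanSpace ℝ (Fin 4) =>
        (((‖ξ‖ ^ 2)⁻¹ : ℝ) : ℂ) * FourierTransform.fourier (⇑φ) ξ) ∧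
    (∫ k : EuclideanSpace ℝ (Fin 4), (((‖k‖ ^ 2)⁻¹ : ℝ) : ℂ) * φ k) =
      ∫ ξ : EuclideanSpace ℝ (Fin 4),
        (((‖ξ‖ ^ 2)⁻¹ : ℝ) : ℂ) * FourierTransform.fourier (⇑φ) ξ := by
  have hdim : finrank ℝ (EuclideanSpace ℝ (Fin 4)) = 4 := finrank_euclideanSpace_fin
  have hφ := φ.norm_le_seminorm ℂ
  have hφ' := (𝓕 φ).norm_le_seminorm ℂ
  simp only [← Complex.real_smul, ← SchwartzMap.fourier_coe]
  refine ⟨integrable_inv_sq_norm_smul φ.integrable hφ (by omega),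
    integrable_inv_sq_norm_smul (𝓕 φ).integrable hφ' (by omega), ?_⟩
  rw [integral_inv_sq_norm_smul_eq_integral_Ioi φ.integrable hφ (by omega),
    integral_inv_sq_norm_smul_eq_integral_Ioi (𝓕 φ).integrable hφ' (by omega),
    ← integral_Ioi_rpow_neg_two_smul_comp_inv]
  congr 1
  refine setIntegral_congr_fun measurableSet_Ioi fun t ht => ?_
  rw [SchwartzMap.fourier_coe, integral_exp_neg_pi_mul_sq_norm_smul_fourier φ.integrable ht, hdim]
  norm_num
end

section
/- Rationalization of the square-root leading singularity of N₂₁^{(4)}: for all y, w ∈ ℂ, setting z = -w(1+y) and z' = -y(1+w), the following identities hold: (i) z - z' = y - w; (ii) 1 + z² + z'² - 2z - 2z' - 2zz' = (1+y+w)²; (iii) the Jacobian determinant of the substitution, (∂z/∂y)(∂z'/∂w) - (∂z/∂w)(∂z'/∂y) = y·w - (1+y)(1+w) = -(1+y+w). Consequently, whenever 1+y+w ≠ 0 and y ≠ w, the product of the leading singularity 1/((z-z')·(1+y+w)) with the Jacobian factor -(1+y+w) equals -1/(y-w). -/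
/-- Rationalization of the square-root leading singularity of `N₂₁⁽⁴⁾`: under the
substitution `z = -w(1+y)`, `z' = -y(1+w)`, one has `z - z' = y - w`, the square-root
argument becomes the perfect square `(1+y+w)²`, the Jacobian determinant equals
`yw - (1+y)(1+w) = -(1+y+w)`, and the leading singularity times the Jacobian factor
simplifies to `-1/(y-w)`. -/
theorem rationalization_N21_leading_singularity (y w : ℂ)
    (z z' : ℂ) (hz : z = -w * (1 + y)) (hz' : z' = -y * (1 + w)) :
    z - z' = y - w ∧
    1 + z ^ 2 + z' ^ 2 - 2 * z - 2 * z' - 2 * z * z' = (1 + y + w) ^ 2 ∧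
    (deriv (fun y' : ℂ => -w * (1 + y')) y * deriv (fun w' : ℂ => -y * (1 + w')) w -
        deriv (fun w' : ℂ => -w' * (1 + y)) w * deriv (fun y' : ℂ => -y' * (1 + w)) y) =
      y * w - (1 + y) * (1 + w) ∧
    y * w - (1 + y) * (1 + w) = -(1 + y + w) ∧
    (1 + y + w ≠ 0 → y ≠ w →
      1 / ((z - z') * (1 + y + w)) * (-(1 + y + w)) = -1 / (y - w)) := by
  subst hz hz'
  have hzz : (-w * (1 + y)) - (-y * (1 + w)) = y - w := by ring
  refine ⟨hzz, by ring, ?_, by ring, ?_⟩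
  · have d1 : HasDerivAt (fun y' : ℂ => -w * (1 + y')) (-w) y := by
      simpa using ((hasDerivAt_id y).const_add 1).const_mul (-w)
    have d2 : HasDerivAt (fun w' : ℂ => -y * (1 + w')) (-y) w := by
      simpa using ((hasDerivAt_id w).const_add 1).const_mul (-y)
    have d3 : HasDerivAt (fun w' : ℂ => -w' * (1 + y)) (-(1 + y)) w := by
      simpa using (hasDerivAt_id w).neg.mul_const (1 + y)
    have d4 : HasDerivAt (fun y' : ℂ => -y' * (1 + w)) (-(1 + w)) y := by
      simpa using (hasDerivAt_id y).neg.mul_const (1 + w)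
    rw [d1.deriv, d2.deriv, d3.deriv, d4.deriv]; ring
  · intro h1 h2
    rw [hzz]
    have hyw : y - w ≠ 0 := sub_ne_zero.mpr h2
    field_simp
end
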